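/- Let b ∈ [0,1], let x_e ∈ [0, b], let s ≥ 0 with x_e + s ≤ 2b, and let P₀ ~ Pois(x_e) and P₁ ~ Pois(s) be independent Poisson random variables. Then E[ P₀ / (P₀ + P₁) ] ≥ x_e · E[ 1/(1 + N) ] = x_e · (1 - e^{-(x_e + s)})/(x_e + s) ≥ x_e · (1 - e^{-2b})/(2b), where N ~ Pois(x_e + s) and the ratio is interpreted as 0 when P₀ = 0. -/

import Mathlib

/-- The probability that a Poisson random variable with parameter `r ≥ 0` equals `n`. -/
noncomputable def poissonProb (r : ℝ) (n : ℕ) : ℝ := Real.exp (-r) * r ^ n / (Nat.factorial n)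

/-!
For independent `P₀ ~ Pois(r)` and `P₁ ~ Pois(t)`, the identity
`n · Pois(r)(n) = r · Pois(r)(n - 1)` turns `E[P₀ / (P₀ + P₁)]` into `r · E[1 / (P₀ + P₁ + 1)]`,
and `P₀ + P₁ ~ Pois(r + t)`, so the first claim holds with equality. The same identity gives
`E[1 / (1 + N)] = (1 - e^{-λ}) / λ` for `N ~ Pois(λ)`; this is the slope at `0` of the concave
function `1 - e^{-x}`, hence decreasing in `λ`.
-/

open Finset Real

theorem Summable.tsum_eq_tsum_sum_antidiagonal {A α : Type*} [AddCommMonoid A] [HasAntidiagonal A]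
    [AddCommMonoid α] [TopologicalSpace α] [ContinuousAdd α] [T3Space α] {g : A × A → α}
    (hg : Summable g) : ∑' p, g p = ∑' n, ∑ p ∈ antidiagonal n, g p := by
  conv_rhs => congr; ext n; rw [← sum_finset_coe, ← tsum_fintype (L := .unconditional _)]
  rw [← HasAntidiagonal.sigmaAntidiagonalEquivProd.tsum_eq g]
  exact Summable.tsum_sigma' (fun n => (hasSum_fintype _).summable)
    (HasAntidiagonal.sigmaAntidiagonalEquivProd.summable_iff.mpr hg)

theorem poissonProb_nonneg {r : ℝ} (hr : 0 ≤ r) (n : ℕ) : 0 ≤ poissonProb r n := by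
  unfold poissonProb; positivity

theorem summable_poissonProb (r : ℝ) : Summable (poissonProb r) := by
  unfold poissonProb
  simp_rw [mul_div_assoc]
  exact (Real.summable_pow_div_factorial r).mul_left (exp (-r))

theorem hasSum_poissonProb (r : ℝ) : HasSum (poissonProb r) 1 := by
  have := (NormedSpace.expSeries_div_hasSum_exp r).mul_left (exp (-r))
  rw [← Real.exp_eq_exp_ℝ, ← Real.exp_add, neg_add_cancel, exp_zero] at this
  unfold poissonProb
  simp_rw [mul_div_assoc]
  exact this

theorem poissonProb_zero (r : ℝ) : poissonProb r 0 = exp (-r) := by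
  simp [poissonProb]

theorem natCast_succ_mul_poissonProb_succ (r : ℝ) (n : ℕ) :
    ((n + 1 : ℕ) : ℝ) * poissonProb r (n + 1) = r * poissonProb r n := by
  unfold poissonProb
  rw [Nat.factorial_succ, Nat.cast_mul, pow_succ]
  field_simp

theorem sum_antidiagonal_poissonProb_mul (r t : ℝ) (k : ℕ) :
    ∑ p ∈ antidiagonal k, poissonProb r p.1 * poissonProb t p.2 = poissonProb (r + t) k := by
  rw [Nat.sum_antidiagonal_eq_sum_range_succ_mk, poissonProb, add_pow, mul_sum, sum_div]
  refine sum_congr rfl fun m hm => ?_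
  have hmk : m ≤ k := Nat.lt_succ_iff.mp (mem_range.mp hm)
  rw [Nat.cast_choose ℝ hmk, poissonProb, poissonProb, neg_add, exp_add]
  field_simp

theorem tsum_natCast_mul_mul_poissonProb (r : ℝ) (f : ℕ → ℝ) :
    ∑' n : ℕ, n * f n * poissonProb r n = r * ∑' n : ℕ, f (n + 1) * poissonProb r n := by
  -- the `n = 0` term vanishes, so reindexing along `succ` needs no summability
  rw [← tsum_mul_left, ← Nat.succ_injective.tsum_eq]
  · refine tsum_congr fun n => ?_
    rw [Nat.succ_eq_add_one, mul_right_comm, natCast_succ_mul_poissonProb_succ]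
    ring
  · rintro (_ | n) h
    · simp at h
    · exact ⟨n, rfl⟩

theorem tsum_tsum_mul_poissonProb_mul_poissonProb {φ : ℕ → ℝ} {C : ℝ} (hφ : ∀ k, |φ k| ≤ C)
    {r t : ℝ} (hr : 0 ≤ r) (ht : 0 ≤ t) :
    ∑' m, ∑' j, φ (m + j) * (poissonProb r m * poissonProb t j) =
      ∑' k, φ k * poissonProb (r + t) k := by
  set g : ℕ × ℕ → ℝ := fun p => φ (p.1 + p.2) * (poissonProb r p.1 * poissonProb t p.2)
  have hg : Summable g := by
    refine .of_norm_bounded (((summable_poissonProb r).mul_of_nonneg (summable_poissonProb t)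
      (poissonProb_nonneg hr) (poissonProb_nonneg ht)).mul_left C) fun p => ?_
    have hprob := mul_nonneg (poissonProb_nonneg hr p.1) (poissonProb_nonneg ht p.2)
    rw [Real.norm_eq_abs, abs_mul, abs_of_nonneg hprob]
    exact mul_le_mul_of_nonneg_right (hφ _) hprob
  calc ∑' m, ∑' j, g (m, j) = ∑' p, g p := (hg.tsum_prod' hg.prod_factor).symm
    _ = ∑' k, ∑ p ∈ antidiagonal k, g p := hg.tsum_eq_tsum_sum_antidiagonal
    _ = ∑' k, φ k * poissonProb (r + t) k := by
      refine tsum_congr fun k => ?_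
      rw [← sum_antidiagonal_poissonProb_mul, mul_sum]
      exact sum_congr rfl fun p hp => by simp only [g, mem_antidiagonal.mp hp]

theorem tsum_tsum_div_add_mul_poissonProb {r t : ℝ} (hr : 0 ≤ r) (ht : 0 ≤ t) :
    ∑' n : ℕ, ∑' j : ℕ, ((n : ℝ) / ((n : ℝ) + (j : ℝ))) * (poissonProb r n * poissonProb t j) =
      r * ∑' k : ℕ, (1 / (1 + (k : ℝ))) * poissonProb (r + t) k := by
  have hφ : ∀ k : ℕ, |1 / (1 + (k : ℝ))| ≤ 1 := fun k => by
    rw [abs_of_nonneg (by positivity)]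
    exact div_le_one_of_le₀ (by simp) (by positivity)
  calc ∑' n : ℕ, ∑' j : ℕ, ((n : ℝ) / ((n : ℝ) + (j : ℝ))) * (poissonProb r n * poissonProb t j)
      = ∑' n : ℕ, n * (∑' j : ℕ, poissonProb t j / (n + j)) * poissonProb r n := by
        refine tsum_congr fun n => ?_
        rw [← tsum_mul_left, ← tsum_mul_right]
        exact tsum_congr fun j => by ring
    _ = r * ∑' m : ℕ, (∑' j : ℕ, poissonProb t j / ((m + 1 : ℕ) + j)) * poissonProb r m :=
        tsum_natCast_mul_mul_poissonProb r _
    _ = r * ∑' m : ℕ, ∑' j : ℕ,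
          1 / (1 + ((m + j : ℕ) : ℝ)) * (poissonProb r m * poissonProb t j) := by
        congr 1
        refine tsum_congr fun m => ?_
        rw [← tsum_mul_right]
        refine tsum_congr fun j => ?_
        push_cast
        ring
    _ = r * ∑' k : ℕ, (1 / (1 + (k : ℝ))) * poissonProb (r + t) k := by
        rw [tsum_tsum_mul_poissonProb_mul_poissonProb hφ hr ht]

theorem tsum_one_div_one_add_mul_poissonProb {l : ℝ} (hl : l ≠ 0) :
    ∑' n : ℕ, (1 / (1 + (n : ℝ))) * poissonProb l n = (1 - exp (-l)) / l := by
  have hshift : ∀ n : ℕ, (1 / (1 + (n : ℝ))) * poissonProb l n = poissonProb l (n + 1) / l := by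
    intro n
    have h := natCast_succ_mul_poissonProb_succ l n
    push_cast at h
    rw [eq_div_iff hl]
    field_simp
    linear_combination -h
  rw [tsum_congr hshift, tsum_div_const, ← poissonProb_zero, ← (hasSum_poissonProb l).tsum_eq,
    (summable_poissonProb l).tsum_eq_zero_add, add_sub_cancel_left]

theorem concaveOn_one_sub_exp_neg : ConcaveOn ℝ Set.univ fun x => 1 - exp (-x) := by
  have h := (convexOn_exp.comp_linearMap (-LinearMap.id)).neg.add_const 1
  convert h using 1 <;> try rfl
  ext x
  simp [sub_eq_neg_add]

theorem antitoneOn_one_sub_exp_neg_div :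
    AntitoneOn (fun x => (1 - exp (-x)) / x) (Set.Ioi 0) := by
  intro x hx y hy hxy
  have := concaveOn_one_sub_exp_neg.slope_anti (Set.mem_univ 0)
    ⟨Set.mem_univ x, hx.ne'⟩ ⟨Set.mem_univ y, hy.ne'⟩ hxy
  simpa [slope_def_field] using this

theorem general_matching_balancedness_estimate_general
    (b xe s : ℝ) (hx0 : 0 ≤ xe)
    (hs : 0 ≤ s) (hsum : xe + s ≤ 2 * b) :
    (∑' n : ℕ, ∑' j : ℕ,
        ((n : ℝ) / ((n : ℝ) + (j : ℝ))) * (poissonProb xe n * poissonProb s j)) ≥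
      xe * ∑' n : ℕ, (1 / (1 + (n : ℝ))) * poissonProb (xe + s) n ∧
    xe * (∑' n : ℕ, (1 / (1 + (n : ℝ))) * poissonProb (xe + s) n) =
      xe * (1 - Real.exp (-(xe + s))) / (xe + s) ∧
    xe * (1 - Real.exp (-(xe + s))) / (xe + s) ≥ xe * (1 - Real.exp (-(2 * b))) / (2 * b) := by
  refine ⟨(tsum_tsum_div_add_mul_poissonProb hx0 hs).ge, ?_⟩
  rcases hx0.eq_or_lt with rfl | hxe
  · simp
  have hl : 0 < xe + s := by linarith
  refine ⟨by rw [tsum_one_div_one_add_mul_poissonProb hl.ne', mul_div_assoc], ?_⟩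
  rw [ge_iff_le, mul_div_assoc, mul_div_assoc]
  exact mul_le_mul_of_nonneg_left (antitoneOn_one_sub_exp_neg_div hl (hl.trans_le hsum) hsum) hx0

/-- For `b ∈ [0,1]`, `x_e ∈ [0,b]`, `s ≥ 0` with `x_e + s ≤ 2b`, and independent
`P₀ ~ Pois(x_e)` and `P₁ ~ Pois(s)`:
`E[P₀/(P₀+P₁)] ≥ x_e · E[1/(1+N)] = x_e·(1-e^{-(x_e+s)})/(x_e+s) ≥ x_e·(1-e^{-2b})/(2b)`,
where `N ~ Pois(x_e+s)` and the ratio is `0` when `P₀ = 0`. -/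
theorem general_matching_balancedness_estimate
    (b xe s : ℝ) (hb0 : 0 ≤ b) (hb1 : b ≤ 1) (hx0 : 0 ≤ xe) (hxb : xe ≤ b)
    (hs : 0 ≤ s) (hsum : xe + s ≤ 2 * b) :
    (∑' n : ℕ, ∑' j : ℕ,
        ((n : ℝ) / ((n : ℝ) + (j : ℝ))) * (poissonProb xe n * poissonProb s j)) ≥
      xe * ∑' n : ℕ, (1 / (1 + (n : ℝ))) * poissonProb (xe + s) n ∧
    xe * (∑' n : ℕ, (1 / (1 + (n : ℝ))) * poissonProb (xe + s) n) =
      xe * (1 - Real.exp (-(xe + s))) / (xe + s) ∧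
    xe * (1 - Real.exp (-(xe + s))) / (xe + s) ≥ xe * (1 - Real.exp (-(2 * b))) / (2 * b) :=
  general_matching_balancedness_estimate_general b xe s hx0 hs hsum
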